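/- Let X_A = Σ_{i=1}^{d_A} α_i |x_i^A⟩⟨x_i^A| and X_B = Σ_{j=1}^{d_B} β_j |x_j^B⟩⟨x_j^B| be Hermitian matrices whose eigenvalues α_1,…,α_{d_A} are pairwise distinct and nonzero and β_1,…,β_{d_B} are pairwise distinct and nonzero, with orthonormal eigenbases {x_i^A} of ℂ^{d_A} and {x_j^B} of ℂ^{d_B}. Then for all density matrices ρ_A on ℂ^{d_A} and ρ_B on ℂ^{d_B}, the grouped distribution of the joint measurement distribution of ρ_A ⊗ ρ_B in the basis {x_i^A ⊗ x_j^B} (grouped by the distinct values of α_i β_j) is majorized by the measurement distribution p(x^A|ρ_A), and is also majorized by p(x^B|ρ_B). -/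

import Mathlib

/-! For a product state the joint distribution factors as `p_A i * p_B j`. Given a set `S` of
`k` product values, the grouped mass of `S` is `∑_j p_B j * ∑_{i : α i * β j ∈ S} p_A i`. For
fixed `j` the map `i ↦ α i * β j` is injective, so the inner sum runs over at most `k` indices
and is bounded by the sum of the `k` largest entries of `p_A`; averaging over the probability
vector `p_B` preserves that bound. Exchanging the roles of the two parties gives the second
majorization. -/

open Matrix
open scoped Kronecker ComplexOrder

noncomputable section

/-- Sum of the `k` largest entries of `v` (zero-padding implicit for nonneg vectors):
the maximum of `∑ i ∈ s, v i` over subsets `s` of cardinality at most `k`. -/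
def topSum {ι : Type*} [Fintype ι] (v : ι → ℝ) (k : ℕ) : ℝ :=
  (Finset.univ.powerset.filter fun s => s.card ≤ k).sup' ⟨∅, by simp⟩ fun s => ∑ i ∈ s, v i

/-- `v ≺ w` (majorization, with implicit zero padding): every partial sum of the `k` largest
entries of `v` is at most that of `w`, and the total sums are equal. -/
def Majorizes {ι κ : Type*} [Fintype ι] [Fintype κ] (v : ι → ℝ) (w : κ → ℝ) : Prop :=
  (∀ k : ℕ, topSum v k ≤ topSum w k) ∧ (∑ i, v i = ∑ j, w j)

/-- The operator norm (largest singular value) of a complex matrix. -/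
def opNorm {m n : Type*} [Fintype m] [Fintype n] [DecidableEq n] (M : Matrix m n ℂ) : ℝ :=
  ‖LinearMap.toContinuousLinearMap (Matrix.toEuclideanLin M)‖

/-- `sCoef U k = s_k`: the maximum operator norm over all submatrices of `U` of class `k`,
i.e. obtained by selecting nonempty row/column sets `R`, `C` with `|R| + |C| = k + 1`. -/
def sCoef {d : ℕ} (U : Matrix (Fin d) (Fin d) ℂ) (k : ℕ) : ℝ :=
  sSup { r : ℝ | ∃ R C : Finset (Fin d), R.Nonempty ∧ C.Nonempty ∧ R.card + C.card = k + 1 ∧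
    r = opNorm (U.submatrix (fun i : {i // i ∈ R} => (i : Fin d))
                            (fun j : {j // j ∈ C} => (j : Fin d))) }

/-- The bound vector `ω^{X⊕Z} = (1, s_1, s_2 - s_1, …, s_d - s_{d-1}, 0, …, 0) ∈ ℝ^{2d}`.
(Note `sCoef U 0 = sSup ∅ = 0`, so the entry at index `1` is `s_1`.) -/
def omegaDS {d : ℕ} (U : Matrix (Fin d) (Fin d) ℂ) : Fin (2 * d) → ℝ := fun i =>
  if (i : ℕ) = 0 then 1
  else if (i : ℕ) ≤ d then sCoef U (i : ℕ) - sCoef U ((i : ℕ) - 1)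
  else 0

/-- A density matrix: positive semidefinite with unit trace. -/
def IsDensityMatrix {n : Type*} [Fintype n] (ρ : Matrix n n ℂ) : Prop :=
  ρ.PosSemidef ∧ ρ.trace = 1

/-- A family of vectors forming an orthonormal basis of `ℂ^d` (w.r.t. `⟨u, v⟩ = star u ⬝ᵥ v`). -/
def OrthonormalBasisVecs {d : ℕ} (x : Fin d → Fin d → ℂ) : Prop :=
  ∀ i j, star (x i) ⬝ᵥ x j = if i = j then 1 else 0

/-- Measurement distribution of a density matrix `ρ` in the basis `x`: `p i = ⟨x i, ρ (x i)⟩`. -/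
def measDist {d : ℕ} (x : Fin d → Fin d → ℂ) (ρ : Matrix (Fin d) (Fin d) ℂ) : Fin d → ℝ :=
  fun i => (star (x i) ⬝ᵥ (ρ *ᵥ x i)).re

/-- The tensor product of vectors. -/
def tensorVec {dA dB : ℕ} (u : Fin dA → ℂ) (v : Fin dB → ℂ) : Fin dA × Fin dB → ℂ :=
  fun ab => u ab.1 * v ab.2

/-- Joint measurement distribution of a bipartite density matrix `ρ` in the product basis
`{xA i ⊗ xB j}`: `p (i,j) = ⟨xA i ⊗ xB j, ρ (xA i ⊗ xB j)⟩`. -/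
def jointDist {dA dB : ℕ} (xA : Fin dA → Fin dA → ℂ) (xB : Fin dB → Fin dB → ℂ)
    (ρ : Matrix (Fin dA × Fin dB) (Fin dA × Fin dB) ℂ) : Fin dA × Fin dB → ℝ :=
  fun ij => (star (tensorVec (xA ij.1) (xB ij.2)) ⬝ᵥ (ρ *ᵥ tensorVec (xA ij.1) (xB ij.2))).re

open scoped Classical in
/-- The finite set of distinct values of the products `α i * β j`. -/
def valueSet {dA dB : ℕ} (α : Fin dA → ℝ) (β : Fin dB → ℝ) : Finset ℝ :=
  Finset.image (fun ij : Fin dA × Fin dB => α ij.1 * β ij.2) Finset.univ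

open scoped Classical in
/-- The grouped distribution of a joint distribution `p`, indexed by the distinct values `l`
of the products `α i * β j`, with entries `∑_{(i,j) : α i * β j = l} p (i,j)`. -/
def groupedDist {dA dB : ℕ} (α : Fin dA → ℝ) (β : Fin dB → ℝ)
    (p : Fin dA × Fin dB → ℝ) : valueSet α β → ℝ :=
  fun l => ∑ ij ∈ Finset.univ.filter (fun ij : Fin dA × Fin dB => α ij.1 * β ij.2 = (l : ℝ)), p ij

/-- Separability: `ρ` is a finite convex combination of tensor products of density matrices. -/
def IsSeparableState {dA dB : ℕ} (ρ : Matrix (Fin dA × Fin dB) (Fin dA × Fin dB) ℂ) : Prop :=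
  ∃ (K : ℕ) (lam : Fin K → ℝ) (σ : Fin K → Matrix (Fin dA) (Fin dA) ℂ)
    (τ : Fin K → Matrix (Fin dB) (Fin dB) ℂ),
    (∀ k, 0 ≤ lam k) ∧ (∑ k, lam k = 1) ∧
    (∀ k, IsDensityMatrix (σ k)) ∧ (∀ k, IsDensityMatrix (τ k)) ∧
    ρ = ∑ k, (lam k : ℂ) • (σ k ⊗ₖ τ k)

section
variable {ι : Type*} [Fintype ι]

lemma sum_le_topSum (v : ι → ℝ) {k : ℕ} {s : Finset ι} (hs : s.card ≤ k) :
    ∑ i ∈ s, v i ≤ topSum v k :=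
  Finset.le_sup' (fun s => ∑ i ∈ s, v i) (by simp [hs])

lemma topSum_le {v : ι → ℝ} {k : ℕ} {r : ℝ}
    (h : ∀ s : Finset ι, s.card ≤ k → ∑ i ∈ s, v i ≤ r) : topSum v k ≤ r :=
  Finset.sup'_le _ _ fun s hs => h s (Finset.mem_filter.mp hs).2

lemma sum_mul_sum_le_topSum {κ : Type*} [Fintype κ] (v : ι → ℝ) {w : κ → ℝ}
    (hw0 : ∀ j, 0 ≤ w j) (hw1 : ∑ j, w j = 1) {k : ℕ} {s : κ → Finset ι}
    (hs : ∀ j, (s j).card ≤ k) : ∑ j, w j * ∑ i ∈ s j, v i ≤ topSum v k :=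
  calc ∑ j, w j * ∑ i ∈ s j, v i ≤ ∑ j, w j * topSum v k :=
        Finset.sum_le_sum fun j _ => mul_le_mul_of_nonneg_left (sum_le_topSum v (hs j)) (hw0 j)
    _ = topSum v k := by rw [← Finset.sum_mul, hw1, one_mul]

lemma card_filter_mul_mem_le {α : ι → ℝ} (hα : Function.Injective α) {c : ℝ} (hc : c ≠ 0)
    (t : Finset ℝ) : (Finset.univ.filter fun i => α i * c ∈ t).card ≤ t.card :=
  Finset.card_le_card_of_injOn (fun i => α i * c) (fun _ hi => (Finset.mem_filter.mp hi).2)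
    fun _ _ _ _ h => hα (mul_right_cancel₀ hc h)

end

section
variable {dA dB : ℕ} {α : Fin dA → ℝ} {β : Fin dB → ℝ}

lemma sum_groupedDist (p : Fin dA × Fin dB → ℝ) (s : Finset (valueSet α β)) :
    ∑ l ∈ s, groupedDist α β p l = ∑ ij with α ij.1 * β ij.2 ∈ s.image Subtype.val, p ij := by
  rw [← Finset.sum_fiberwise_eq_sum_filter, Finset.sum_image Subtype.val_injective.injOn]
  rfl

lemma sum_groupedDist_univ (p : Fin dA × Fin dB → ℝ) :
    ∑ l, groupedDist α β p l = ∑ ij, p ij := by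
  rw [sum_groupedDist, Finset.filter_true_of_mem]
  exact fun ij _ => Finset.mem_image_of_mem Subtype.val
    (Finset.mem_univ ⟨_, Finset.mem_image_of_mem _ (Finset.mem_univ ij)⟩)

lemma topSum_groupedDist_mul_le_left (hα : Function.Injective α) (hβ0 : ∀ j, β j ≠ 0)
    (a : Fin dA → ℝ) {b : Fin dB → ℝ} (hb0 : ∀ j, 0 ≤ b j) (hb1 : ∑ j, b j = 1) (k : ℕ) :
    topSum (groupedDist α β fun ij => a ij.1 * b ij.2) k ≤ topSum a k := by
  refine topSum_le fun s hs => ?_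
  have hcard : ∀ j, (Finset.univ.filter fun i => α i * β j ∈ s.image Subtype.val).card ≤ k :=
    fun j => (card_filter_mul_mem_le hα (hβ0 j) _).trans (Finset.card_image_le.trans hs)
  calc ∑ l ∈ s, groupedDist α β (fun ij => a ij.1 * b ij.2) l
      = ∑ j, b j * ∑ i with α i * β j ∈ s.image Subtype.val, a i := by
        rw [sum_groupedDist, Finset.sum_filter, Fintype.sum_prod_type_right]
        simp only [Finset.mul_sum, Finset.sum_filter, mul_ite, mul_zero, mul_comm (b _) (a _)]
    _ ≤ topSum a k := sum_mul_sum_le_topSum a hb0 hb1 hcard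

lemma topSum_groupedDist_mul_le_right (hβ : Function.Injective β) (hα0 : ∀ i, α i ≠ 0)
    {a : Fin dA → ℝ} (ha0 : ∀ i, 0 ≤ a i) (ha1 : ∑ i, a i = 1) (b : Fin dB → ℝ) (k : ℕ) :
    topSum (groupedDist α β fun ij => a ij.1 * b ij.2) k ≤ topSum b k := by
  refine topSum_le fun s hs => ?_
  have hcard : ∀ i, (Finset.univ.filter fun j => β j * α i ∈ s.image Subtype.val).card ≤ k :=
    fun i => (card_filter_mul_mem_le hβ (hα0 i) _).trans (Finset.card_image_le.trans hs)
  calc ∑ l ∈ s, groupedDist α β (fun ij => a ij.1 * b ij.2) l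
      = ∑ i, a i * ∑ j with β j * α i ∈ s.image Subtype.val, b j := by
        rw [sum_groupedDist, Finset.sum_filter, Fintype.sum_prod_type]
        simp only [Finset.mul_sum, Finset.sum_filter, mul_ite, mul_zero, mul_comm (β _) (α _)]
    _ ≤ topSum b k := sum_mul_sum_le_topSum b ha0 ha1 hcard

lemma majorizes_groupedDist_mul_left (hα : Function.Injective α) (hβ0 : ∀ j, β j ≠ 0)
    (a : Fin dA → ℝ) {b : Fin dB → ℝ} (hb0 : ∀ j, 0 ≤ b j) (hb1 : ∑ j, b j = 1) :
    Majorizes (groupedDist α β fun ij => a ij.1 * b ij.2) a :=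
  ⟨topSum_groupedDist_mul_le_left hα hβ0 a hb0 hb1, by
    rw [sum_groupedDist_univ, Fintype.sum_prod_type, ← Finset.sum_mul_sum, hb1, mul_one]⟩

lemma majorizes_groupedDist_mul_right (hβ : Function.Injective β) (hα0 : ∀ i, α i ≠ 0)
    {a : Fin dA → ℝ} (ha0 : ∀ i, 0 ≤ a i) (ha1 : ∑ i, a i = 1) (b : Fin dB → ℝ) :
    Majorizes (groupedDist α β fun ij => a ij.1 * b ij.2) b :=
  ⟨topSum_groupedDist_mul_le_right hβ hα0 ha0 ha1 b, by
    rw [sum_groupedDist_univ, Fintype.sum_prod_type, ← Finset.sum_mul_sum, ha1, one_mul]⟩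

end

section
variable {dA dB : ℕ}

lemma star_tensorVec (u : Fin dA → ℂ) (v : Fin dB → ℂ) :
    star (tensorVec u v) = tensorVec (star u) (star v) := by
  ext ij
  simp [tensorVec]

lemma tensorVec_dotProduct_tensorVec (u u' : Fin dA → ℂ) (v v' : Fin dB → ℂ) :
    tensorVec u v ⬝ᵥ tensorVec u' v' = (u ⬝ᵥ u') * (v ⬝ᵥ v') := by
  simp only [dotProduct, tensorVec, Fintype.sum_prod_type, Finset.sum_mul_sum]
  exact Finset.sum_congr rfl fun i _ => Finset.sum_congr rfl fun j _ => by ring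

lemma kronecker_mulVec_tensorVec (A : Matrix (Fin dA) (Fin dA) ℂ)
    (B : Matrix (Fin dB) (Fin dB) ℂ) (u : Fin dA → ℂ) (v : Fin dB → ℂ) :
    (A ⊗ₖ B) *ᵥ tensorVec u v = tensorVec (A *ᵥ u) (B *ᵥ v) := by
  ext ij
  simp only [mulVec, dotProduct, tensorVec, kroneckerMap_apply, Fintype.sum_prod_type,
    Finset.sum_mul_sum]
  exact Finset.sum_congr rfl fun i _ => Finset.sum_congr rfl fun j _ => by ring

lemma jointDist_kronecker {xA : Fin dA → Fin dA → ℂ} {xB : Fin dB → Fin dB → ℂ}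
    {ρA : Matrix (Fin dA) (Fin dA) ℂ} {ρB : Matrix (Fin dB) (Fin dB) ℂ}
    (hρA : ρA.IsHermitian) :
    jointDist xA xB (ρA ⊗ₖ ρB) = fun ij => measDist xA ρA ij.1 * measDist xB ρB ij.2 := by
  ext ij
  rw [jointDist, kronecker_mulVec_tensorVec, star_tensorVec, tensorVec_dotProduct_tensorVec,
    Complex.mul_re, ← RCLike.im_eq_complex_im, hρA.im_star_dotProduct_mulVec_self, zero_mul,
    sub_zero]
  rfl

end

section
variable {d : ℕ} {x : Fin d → Fin d → ℂ}

lemma measDist_nonneg {ρ : Matrix (Fin d) (Fin d) ℂ} (hρ : ρ.PosSemidef) :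
    ∀ i, 0 ≤ measDist x ρ i :=
  fun i => hρ.re_dotProduct_nonneg (x i)

lemma sum_measDist (hx : OrthonormalBasisVecs x) (ρ : Matrix (Fin d) (Fin d) ℂ) :
    ∑ i, measDist x ρ i = ρ.trace.re := by
  set V : Matrix (Fin d) (Fin d) ℂ := (Matrix.of x)ᵀ
  have hV : Vᴴ * V = 1 := by
    ext i j
    simpa [V, Matrix.mul_apply, Matrix.one_apply, dotProduct] using hx i j
  -- completeness of the basis: a left inverse of a square matrix is a right inverse
  have hV' : V * Vᴴ = 1 := mul_eq_one_comm.mp hV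
  have hdiag : ∀ i, star (x i) ⬝ᵥ (ρ *ᵥ x i) = (Vᴴ * ρ * V) i i := fun i => by
    rw [mul_mul_apply]
    rfl
  calc ∑ i, measDist x ρ i = (Vᴴ * ρ * V).trace.re := by
        simp only [measDist, hdiag, Matrix.trace, Matrix.diag, Complex.re_sum]
    _ = ρ.trace.re := by
        rw [Matrix.mul_assoc, Matrix.trace_mul_comm, Matrix.mul_assoc, hV', Matrix.mul_one]

lemma sum_measDist_eq_one (hx : OrthonormalBasisVecs x) {ρ : Matrix (Fin d) (Fin d) ℂ}
    (hρ : IsDensityMatrix ρ) : ∑ i, measDist x ρ i = 1 := by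
  rw [sum_measDist hx, hρ.2, Complex.one_re]

end

/-- Gühne–Lewenstein, Lemma 1: for product states `ρ_A ⊗ ρ_B`, the grouped joint
distribution in the product eigenbasis of `X_A ⊗ X_B` (grouped by the distinct values of
`α i * β j`) is majorized by each marginal measurement distribution. -/
theorem grouped_joint_dist_product_state_majorized {dA dB : ℕ}
    (α : Fin dA → ℝ) (β : Fin dB → ℝ)
    (hα : Function.Injective α) (hα0 : ∀ i, α i ≠ 0)
    (hβ : Function.Injective β) (hβ0 : ∀ j, β j ≠ 0)
    (xA : Fin dA → Fin dA → ℂ) (xB : Fin dB → Fin dB → ℂ)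
    (hxA : OrthonormalBasisVecs xA) (hxB : OrthonormalBasisVecs xB)
    (ρA : Matrix (Fin dA) (Fin dA) ℂ) (ρB : Matrix (Fin dB) (Fin dB) ℂ)
    (hρA : IsDensityMatrix ρA) (hρB : IsDensityMatrix ρB) :
    Majorizes (groupedDist α β (jointDist xA xB (ρA ⊗ₖ ρB))) (measDist xA ρA) ∧
    Majorizes (groupedDist α β (jointDist xA xB (ρA ⊗ₖ ρB))) (measDist xB ρB) := by
  rw [jointDist_kronecker hρA.1.isHermitian]
  exact ⟨majorizes_groupedDist_mul_left hα hβ0 _ (measDist_nonneg hρB.1)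
      (sum_measDist_eq_one hxB hρB),
    majorizes_groupedDist_mul_right hβ hα0 (measDist_nonneg hρA.1)
      (sum_measDist_eq_one hxA hρA) _⟩

end
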